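/- Let μ̄^L(0) = ((1-cos ω)/(3-2cos ω))²(1 + sin ω/(1+sin²ω)) and μ̄^R(0) = ((1-cos ω)/(3-2cos ω))²(1 - sin ω/(1+sin²ω)). If |φ₀^L|² = μ̄^L(0) and |φ₀^R|² = μ̄^R(0), then the stationary measure μ_I^{(Ψ̃₀)}(x) of Proposition 5.1 coincides with the time-averaged limit measure μ̄_∞(x) of Corollary 3.2 for every x ∈ ℤ. -/

import Mathlib

open Real

/-- The stationary measure of the one-defect quantum walk (Proposition 5.1). -/
noncomputable def stationaryMeasure (ω : ℝ) (φL φR : ℂ) (x : ℤ) : ℝ :=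
  (1 / (3 - 2 * Real.cos ω)) ^ x.natAbs *
    (if x = 0 then ‖φL‖ ^ 2 + ‖φR‖ ^ 2
     else if 0 < x then 2 * (2 - Real.cos ω) * ‖φL‖ ^ 2
     else 2 * (2 - Real.cos ω) * ‖φR‖ ^ 2)

/-- Time-averaged limit measure of the one-defect quantum walk (Corollary 3.2). -/
noncomputable def timeAvgMeasure (ω : ℝ) (x : ℤ) : ℝ :=
  if x = 0 then 2 * ((1 - Real.cos ω) / (3 - 2 * Real.cos ω)) ^ 2
  else
    (2 * ((1 - Real.cos ω) / (3 - 2 * Real.cos ω)) ^ 2) *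
      ((2 - Real.cos ω) / (3 - 2 * Real.cos ω) ^ (x.natAbs)) *
      (1 + (if 0 < x then (1 : ℝ) else -1) * Real.sin ω / (1 + Real.sin ω ^ 2))

section Unfolding

variable (ω : ℝ) (φL φR : ℂ) {x : ℤ}

theorem stationaryMeasure_zero :
    stationaryMeasure ω φL φR 0 = ‖φL‖ ^ 2 + ‖φR‖ ^ 2 := by
  simp [stationaryMeasure]

theorem stationaryMeasure_of_pos (hx : 0 < x) :
    stationaryMeasure ω φL φR x =
      2 * (2 - cos ω) * ‖φL‖ ^ 2 / (3 - 2 * cos ω) ^ x.natAbs := by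
  simp only [stationaryMeasure, hx.ne', hx, if_false, if_true, one_div_pow]
  ring

theorem stationaryMeasure_of_neg (hx : x < 0) :
    stationaryMeasure ω φL φR x =
      2 * (2 - cos ω) * ‖φR‖ ^ 2 / (3 - 2 * cos ω) ^ x.natAbs := by
  simp only [stationaryMeasure, hx.ne, hx.not_gt, if_false, one_div_pow]
  ring

theorem timeAvgMeasure_zero :
    timeAvgMeasure ω 0 = 2 * ((1 - cos ω) / (3 - 2 * cos ω)) ^ 2 := by
  simp [timeAvgMeasure]

theorem timeAvgMeasure_of_pos (hx : 0 < x) :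
    timeAvgMeasure ω x = 2 * ((1 - cos ω) / (3 - 2 * cos ω)) ^ 2 *
      ((2 - cos ω) / (3 - 2 * cos ω) ^ x.natAbs) * (1 + sin ω / (1 + sin ω ^ 2)) := by
  simp only [timeAvgMeasure, hx.ne', hx, if_false, if_true, one_mul]

theorem timeAvgMeasure_of_neg (hx : x < 0) :
    timeAvgMeasure ω x = 2 * ((1 - cos ω) / (3 - 2 * cos ω)) ^ 2 *
      ((2 - cos ω) / (3 - 2 * cos ω) ^ x.natAbs) * (1 - sin ω / (1 + sin ω ^ 2)) := by
  simp only [timeAvgMeasure, hx.ne, hx.not_gt, if_false, neg_one_mul, neg_div, ← sub_eq_add_neg]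

end Unfolding

theorem stationary_eq_timeAveraged_general (ω : ℝ) (φL φR : ℂ)
    (hL : ‖φL‖ ^ 2 =
      ((1 - Real.cos ω) / (3 - 2 * Real.cos ω)) ^ 2 *
        (1 + Real.sin ω / (1 + Real.sin ω ^ 2)))
    (hR : ‖φR‖ ^ 2 =
      ((1 - Real.cos ω) / (3 - 2 * Real.cos ω)) ^ 2 *
        (1 - Real.sin ω / (1 + Real.sin ω ^ 2))) :
    ∀ x : ℤ, stationaryMeasure ω φL φR x = timeAvgMeasure ω x := by
  intro x
  rcases lt_trichotomy x 0 with hx | rfl | hx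
  · rw [stationaryMeasure_of_neg _ _ _ hx, timeAvgMeasure_of_neg _ hx, hR]
    ring
  · rw [stationaryMeasure_zero, timeAvgMeasure_zero, hL, hR]
    ring
  · rw [stationaryMeasure_of_pos _ _ _ hx, timeAvgMeasure_of_pos _ hx, hL]
    ring

theorem stationary_eq_timeAveraged (ω : ℝ) (hω : ω ∈ Set.Ico 0 (2 * π)) (φL φR : ℂ)
    (hL : ‖φL‖ ^ 2 =
      ((1 - Real.cos ω) / (3 - 2 * Real.cos ω)) ^ 2 *
        (1 + Real.sin ω / (1 + Real.sin ω ^ 2)))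
    (hR : ‖φR‖ ^ 2 =
      ((1 - Real.cos ω) / (3 - 2 * Real.cos ω)) ^ 2 *
        (1 - Real.sin ω / (1 + Real.sin ω ^ 2))) :
    ∀ x : ℤ, stationaryMeasure ω φL φR x = timeAvgMeasure ω x :=
  stationary_eq_timeAveraged_general ω φL φR hL hR
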